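/- Let R be an Erdős sieve over an étale ℚ-algebra K and (I_N) any Følner sequence in O_K. Then R has strong light tails for (I_N) if and only if for every L ≥ 0 the tail sieve R^L, supported on (𝔟_{L+i})_{i≥1} and defined by R^L_i := R_{L+i}, has weak light tails for (I_N). -/

import Mathlib

open Filter Topology MeasureTheory Pointwise symmDiff

noncomputable section

namespace ErdosSieve

variable {O : Type} [CommRing O]

/-- A sieve over (the ring of integers of) an étale `ℚ`-algebra: a sequence of pairwise
coprime invertible (i.e. finite-quotient) ideals `b i` together with, for each `i`, a finite
set `gen i` of representatives, so that the sieved-out set is `R_i = gen i + b i`, which is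
required to be a proper subset of the ring. -/
structure Sieve (O : Type) [CommRing O] : Type where
  b : ℕ → Ideal O
  gen : ℕ → Finset O
  coprime : ∀ i j, i ≠ j → b i ⊔ b j = ⊤
  finQuot : ∀ i, Finite (O ⧸ b i)
  ne_univ : ∀ i, (↑(gen i) : Set O) + (↑(b i) : Set O) ≠ Set.univ

/-- The `i`-th sieved-out set `R_i = gen i + b i`. -/
def Sieve.RSet (S : Sieve O) (i : ℕ) : Set O := (↑(S.gen i) : Set O) + (↑(S.b i) : Set O)

/-- The set `F_R` of `R`-free numbers. -/
def Sieve.FR (S : Sieve O) : Set O := (⋃ i, S.RSet i)ᶜ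

/-- The norm `N(b i)` of the `i`-th ideal. -/
def Sieve.normb (S : Sieve O) (i : ℕ) : ℕ := Nat.card (O ⧸ S.b i)

/-- The number `|R_i|` of residue classes modulo `b i` met by `R_i`. -/
def Sieve.cardR (S : Sieve O) (i : ℕ) : ℕ :=
  Nat.card ((Ideal.Quotient.mk (S.b i)) '' (S.RSet i))

/-- A sieve is Erdős if `∑ |R_i| / N(b_i) < ∞`. -/
def Sieve.IsErdos (S : Sieve O) : Prop :=
  Summable fun i => (S.cardR i : ℝ) / (S.normb i : ℝ)

/-- A Følner sequence: finite nonempty subsets of `O` which are asymptotically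
translation-invariant. -/
def IsFolner (I : ℕ → Set O) : Prop :=
  (∀ N, (I N).Finite) ∧ (∀ N, (I N).Nonempty) ∧
    ∀ x : O, Tendsto
      (fun N => (Nat.card ↥(((x + ·) '' I N) ∆ (I N)) : ℝ) / (Nat.card ↥(I N) : ℝ))
      atTop (𝓝 0)

/-- Upper density along a (Følner) sequence. -/
def upperDensity (I : ℕ → Set O) (A : Set O) : ℝ :=
  limsup (fun N => (Nat.card ↥(A ∩ I N) : ℝ) / (Nat.card ↥(I N) : ℝ)) atTop

/-- `A` has density `d` along the sequence `I`. -/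
def HasDensity (I : ℕ → Set O) (A : Set O) (d : ℝ) : Prop :=
  Tendsto (fun N => (Nat.card ↥(A ∩ I N) : ℝ) / (Nat.card ↥(I N) : ℝ)) atTop (𝓝 d)

/-- `⋃_{i ≥ L} R i`. -/
def unionGe (R : ℕ → Set O) (L : ℕ) : Set O := ⋃ i, ⋃ (_ : L ≤ i), R i

/-- `⋃_{i < L} R i`. -/
def unionLt (R : ℕ → Set O) (L : ℕ) : Set O := ⋃ i, ⋃ (_ : i < L), R i

/-- The weak light tails property for a family of sieved-out sets:
`limsup`-density of `⋃_{i ≥ L} R_i ∖ ⋃_{j < L} R_j` tends to `0` as `L → ∞`. -/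
def WeakLightTailsFam (I : ℕ → Set O) (R : ℕ → Set O) : Prop :=
  Tendsto (fun L => upperDensity I (unionGe R L \ unionLt R L)) atTop (𝓝 0)

/-- The strong light tails property for a family of sieved-out sets. -/
def StrongLightTailsFam (I : ℕ → Set O) (R : ℕ → Set O) : Prop :=
  Tendsto (fun L => upperDensity I (unionGe R L)) atTop (𝓝 0)

/-- A sieve has weak light tails for `I` if it is Erdős and the tail differences have
vanishing upper density. -/
def Sieve.HasWeakLightTails (S : Sieve O) (I : ℕ → Set O) : Prop :=
  S.IsErdos ∧ WeakLightTailsFam I S.RSet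

/-- A sieve has strong light tails for `I` if it is Erdős and the tails have vanishing
upper density. -/
def Sieve.HasStrongLightTails (S : Sieve O) (I : ℕ → Set O) : Prop :=
  S.IsErdos ∧ StrongLightTailsFam I S.RSet

/-- The infinite product `∏_i (1 - |R_i|/N(b_i))`, realized as the infimum of the
(nonincreasing) sequence of partial products, i.e. as its limit. -/
def Sieve.prodDensity (S : Sieve O) : ℝ :=
  ⨅ L : ℕ, ∏ i ∈ Finset.range L, (1 - (S.cardR i : ℝ) / (S.normb i : ℝ))

/-- `A` is an `R`-admissible set: `-A + R_i ≠ O` for all `i`. -/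
def Sieve.Admissible (S : Sieve O) (A : Set O) : Prop :=
  ∀ i, -A + S.RSet i ≠ Set.univ

/-- The number `|-A + R_i|` of residue classes modulo `b i` met by `-A + R_i`. -/
def Sieve.cardShift (S : Sieve O) (A : Set O) (i : ℕ) : ℕ :=
  Nat.card ((Ideal.Quotient.mk (S.b i)) '' (-A + S.RSet i))

/-- The infinite product `∏_i (1 - |-A + R_i|/N(b_i))` (as the infimum of the
partial products). -/
def Sieve.prodDensityShift (S : Sieve O) (A : Set O) : ℝ :=
  ⨅ L : ℕ, ∏ i ∈ Finset.range L, (1 - (S.cardShift A i : ℝ) / (S.normb i : ℝ))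

/-- A subset `Y` of `O` is syndetic if finitely many translates of it cover `O`. -/
def Syndetic (Y : Set O) : Prop := ∃ C : Finset O, Y + (↑C : Set O) = Set.univ

-- Indicator of a subset of `O`, i.e. a point of the shift space `{0,1}^O`.
open Classical in
def chiSet (A : Set O) : O → Bool := fun x => if x ∈ A then true else false

/-- The shift action `S_a(A) = A - a` on `{0,1}^O`: `χ_{A - a}(x) = χ_A (x + a)`. -/
def shiftB (a : O) (f : O → Bool) : O → Bool := fun x => f (x + a)

/-- The odometer group `G_R = ∏ i, O ⧸ b i`. -/
abbrev Sieve.GR (S : Sieve O) : Type := ∀ i : ℕ, O ⧸ S.b i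

-- The map `φ_R : G_R → {0,1}^O`: `a ∈ φ_R(g)` iff `a + g i` avoids (the image of) `R_i`
-- modulo `b i` for every `i`.
open Classical in
def Sieve.phiB (S : Sieve O) (g : S.GR) : O → Bool := fun a =>
  if (∀ i, (Ideal.Quotient.mk (S.b i) a + g i) ∉ (Ideal.Quotient.mk (S.b i)) '' (S.RSet i))
  then true else false

/-- The Mirsky measure `ν_R` on `{0,1}^O`: the pushforward under `φ_R` of the Haar
probability measure of the compact group `G_R` (each factor being finite and discrete,
and the Haar measure being normalized so that the whole group has measure `1`). -/
def Sieve.mirsky (S : Sieve O) : Measure (O → Bool) := by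
  letI : ∀ i, TopologicalSpace (O ⧸ S.b i) := fun _ => ⊥
  haveI : ∀ i, DiscreteTopology (O ⧸ S.b i) := fun _ => ⟨rfl⟩
  haveI : ∀ i, Finite (O ⧸ S.b i) := S.finQuot
  haveI : ∀ i, IsTopologicalAddGroup (O ⧸ S.b i) := fun i => { }
  letI : MeasurableSpace S.GR := borel _
  haveI : BorelSpace S.GR := ⟨rfl⟩
  exact Measure.map S.phiB (Measure.addHaarMeasure (G := S.GR) ⊤)

/-- The ring of integers of the étale `ℚ`-algebra `K 0 × ⋯ × K (m-1)`. -/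
abbrev OK {m : ℕ} (K : Fin m → Type) [∀ j, Field (K j)] [∀ j, NumberField (K j)] : Type :=
  ∀ j, NumberField.RingOfIntegers (K j)

variable {m : ℕ} (K : Fin m → Type) [∀ j, Field (K j)] [∀ j, NumberField (K j)]

/-- The "ball" `B_N` in `O_K`: elements all of whose archimedean embeddings have absolute
value at most `N` (the max over embeddings of all the number-field components). -/
def ball (N : ℕ) : Set (OK K) :=
  {x | ∀ j, ∀ φ : K j →+* ℂ,
    ‖φ (algebraMap (NumberField.RingOfIntegers (K j)) (K j) (x j))‖ ≤ N}

/-! If `R` has strong light tails, the sets defining the weak light tails of a tail sieve `R^L`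
are contained in the tails `⋃_{i ≥ L + L'} R_i` of `R` itself. Conversely, along a Følner
sequence a residue class modulo `b` has upper density at most `1 / N(b)`: the `N(b)` classes
partition `O_K` and, being translates of each other, meet each `I_N` in nearly equal numbers;
hence `d̄(R_i) ≤ |R_i| / N(b_i)`. Splitting `⋃_{i ≥ L} R_i` into its first `L'` members and
the weak tail of `R^L` bounds its upper density by `∑_{i ≥ L} |R_i| / N(b_i)`, which tends to
`0` because `R` is Erdős. -/

/-- `upperDensity I A` is, by definition, the `limsup` of this in `N`. -/
def empiricalDensity {α : Type} (I : ℕ → Set α) (A : Set α) (N : ℕ) : ℝ :=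
  (Nat.card ↥(A ∩ I N) : ℝ) / (Nat.card ↥(I N) : ℝ)

section Density

variable {α : Type} {I : ℕ → Set α}

lemma empiricalDensity_nonneg (A : Set α) (N : ℕ) : 0 ≤ empiricalDensity I A N := by
  unfold empiricalDensity; positivity

lemma empiricalDensity_mono {A B : Set α} (h : A ⊆ B) (N : ℕ) :
    empiricalDensity I A N ≤ empiricalDensity I B N := by
  rcases (I N).finite_or_infinite with hfin | hinf
  · exact div_le_div_of_nonneg_right
      (by exact_mod_cast Nat.card_mono (hfin.inter_of_right B) (Set.inter_subset_inter_left _ h))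
      (Nat.cast_nonneg _)
  · simp [empiricalDensity, hinf.card_eq_zero]

lemma empiricalDensity_le_one (A : Set α) (N : ℕ) : empiricalDensity I A N ≤ 1 := by
  refine (empiricalDensity_mono (Set.subset_univ A) N).trans ?_
  simp only [empiricalDensity, Set.univ_inter]
  exact div_self_le_one _

lemma empiricalDensity_union_le (A B : Set α) (N : ℕ) :
    empiricalDensity I (A ∪ B) N ≤ empiricalDensity I A N + empiricalDensity I B N := by
  simp only [empiricalDensity, ← add_div, Nat.card_coe_set_eq, Set.union_inter_distrib_right]
  exact div_le_div_of_nonneg_right (by exact_mod_cast Set.ncard_union_le _ _) (Nat.cast_nonneg _)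

lemma isBoundedUnder_le_empiricalDensity (A : Set α) :
    IsBoundedUnder (· ≤ ·) atTop (empiricalDensity I A) :=
  isBoundedUnder_of ⟨1, empiricalDensity_le_one A⟩

lemma isBoundedUnder_ge_empiricalDensity (A : Set α) :
    IsBoundedUnder (· ≥ ·) atTop (empiricalDensity I A) :=
  isBoundedUnder_of ⟨0, empiricalDensity_nonneg A⟩

lemma upperDensity_nonneg (A : Set α) : 0 ≤ upperDensity I A :=
  le_limsup_of_frequently_le (Frequently.of_forall (empiricalDensity_nonneg A))
    (isBoundedUnder_le_empiricalDensity A)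

lemma upperDensity_mono {A B : Set α} (h : A ⊆ B) : upperDensity I A ≤ upperDensity I B :=
  limsup_le_limsup (Eventually.of_forall (empiricalDensity_mono h))
    (isBoundedUnder_ge_empiricalDensity A).isCoboundedUnder_le
    (isBoundedUnder_le_empiricalDensity B)

lemma upperDensity_union_le (A B : Set α) :
    upperDensity I (A ∪ B) ≤ upperDensity I A + upperDensity I B :=
  (limsup_le_limsup (Eventually.of_forall (empiricalDensity_union_le A B))
      (isBoundedUnder_ge_empiricalDensity _).isCoboundedUnder_le
      (isBoundedUnder_le_add (isBoundedUnder_le_empiricalDensity A)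
        (isBoundedUnder_le_empiricalDensity B))).trans
    (limsup_add_le (isBoundedUnder_ge_empiricalDensity A) (isBoundedUnder_le_empiricalDensity A)
      (isBoundedUnder_ge_empiricalDensity B).isCoboundedUnder_le
      (isBoundedUnder_le_empiricalDensity B))

lemma upperDensity_biUnion_le {ι : Type*} (t : Finset ι) (A : ι → Set α) :
    upperDensity I (⋃ i ∈ t, A i) ≤ ∑ i ∈ t, upperDensity I (A i) := by
  classical
  induction t using Finset.induction with
  | empty => simp [upperDensity]
  | insert a s ha ih =>
    rw [Finset.set_biUnion_insert, Finset.sum_insert ha]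
    exact (upperDensity_union_le _ _).trans (by gcongr)

lemma upperDensity_le_of_tendsto {A : Set α} {g : ℕ → ℝ} {a : ℝ}
    (hA : ∀ N, empiricalDensity I A N ≤ g N) (hg : Tendsto g atTop (𝓝 a)) :
    upperDensity I A ≤ a :=
  hg.limsup_eq ▸ limsup_le_limsup (Eventually.of_forall hA)
    (isBoundedUnder_ge_empiricalDensity A).isCoboundedUnder_le hg.isBoundedUnder_le

lemma sum_empiricalDensity_fiber_le_one {G : Type*} [Fintype G] (q : α → G) (N : ℕ) :
    ∑ c, empiricalDensity I (q ⁻¹' {c}) N ≤ 1 := by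
  rcases (I N).finite_or_infinite with hfin | hinf
  · classical
    have hcard : ∑ c, (Nat.card ↥(q ⁻¹' {c} ∩ I N) : ℝ) = Nat.card ↥(I N) := by
      rw [Nat.card_coe_set_eq, Set.ncard_eq_toFinset_card _ hfin,
        Finset.card_eq_sum_card_fiberwise (f := q) (t := Finset.univ) fun _ _ => by simp]
      push_cast
      refine Finset.sum_congr rfl fun c _ => ?_
      rw [Nat.card_coe_set_eq, ← Set.ncard_coe_finset]
      congr 2
      ext x
      simp [and_comm]
    simp only [empiricalDensity, ← Finset.sum_div, hcard]
    exact div_self_le_one _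
  · simp [empiricalDensity, hinf.card_eq_zero]

lemma empiricalDensity_le_image_add [Add α] [IsLeftCancelAdd α] {N : ℕ} (hfin : (I N).Finite)
    (A : Set α) (d : α) :
    empiricalDensity I A N ≤ empiricalDensity I ((d + ·) '' A) N +
      (Nat.card ↥(((d + ·) '' I N) ∆ I N) : ℝ) / (Nat.card ↥(I N) : ℝ) := by
  have hsub : (d + ·) '' (A ∩ I N) ⊆ ((d + ·) '' A ∩ I N) ∪ (((d + ·) '' I N) ∆ I N) := by
    rintro _ ⟨x, ⟨hxA, hxI⟩, rfl⟩
    by_cases h : d + x ∈ I N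
    · exact Or.inl ⟨⟨x, hxA, rfl⟩, h⟩
    · exact Or.inr (Or.inl ⟨⟨x, hxI, rfl⟩, h⟩)
  have hfin' : (((d + ·) '' A ∩ I N) ∪ (((d + ·) '' I N) ∆ I N)).Finite :=
    (hfin.inter_of_right _).union
      (((hfin.image _).union hfin).subset symmDiff_le_sup)
  have hcard : Nat.card ↥(A ∩ I N) ≤
      Nat.card ↥((d + ·) '' A ∩ I N) + Nat.card ↥(((d + ·) '' I N) ∆ I N) := by
    simp only [Nat.card_coe_set_eq]
    calc (A ∩ I N).ncard = ((d + ·) '' (A ∩ I N)).ncard :=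
          (Set.ncard_image_of_injective _ (add_right_injective d)).symm
      _ ≤ _ := Set.ncard_le_ncard hsub hfin'
      _ ≤ _ := Set.ncard_union_le _ _
  simp only [empiricalDensity, ← add_div]
  exact div_le_div_of_nonneg_right (by exact_mod_cast hcard) (Nat.cast_nonneg _)

end Density

section Folner

variable {I : ℕ → Set O}

lemma upperDensity_fiber_le {G : Type*} [AddCommGroup G] [Finite G] (hI : IsFolner I)
    (q : O →+ G) (hq : Function.Surjective q) (c : G) :
    upperDensity I (q ⁻¹' {c}) ≤ 1 / Nat.card G := by
  have := Fintype.ofFinite G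
  choose d hd using fun c' => hq (c' - c)
  have hfiber : ∀ c', (d c' + ·) '' (q ⁻¹' {c}) ⊆ q ⁻¹' {c'} := by
    rintro c' _ ⟨x, hx, rfl⟩
    simp only [Set.mem_preimage, Set.mem_singleton_iff] at hx ⊢
    rw [map_add, hd, hx, sub_add_cancel]
  set defect : ℕ → ℝ := fun N => ∑ c', (Nat.card ↥(((d c' + ·) '' I N) ∆ I N) : ℝ) /
    (Nat.card ↥(I N) : ℝ)
  have hbound : ∀ N, empiricalDensity I (q ⁻¹' {c}) N ≤ (1 + defect N) / Nat.card G := by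
    intro N
    rw [le_div_iff₀' (by exact_mod_cast Nat.card_pos), Nat.card_eq_fintype_card,
      ← Finset.card_univ, ← nsmul_eq_mul, ← Finset.sum_const]
    calc ∑ _c' : G, empiricalDensity I (q ⁻¹' {c}) N
        ≤ ∑ c' : G, (empiricalDensity I (q ⁻¹' {c'}) N +
            (Nat.card ↥(((d c' + ·) '' I N) ∆ I N) : ℝ) / (Nat.card ↥(I N) : ℝ)) :=
          Finset.sum_le_sum fun c' _ => (empiricalDensity_le_image_add (hI.1 N) _ _).trans
            (add_le_add (empiricalDensity_mono (hfiber c') N) le_rfl)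
      _ ≤ 1 + defect N := by
          rw [Finset.sum_add_distrib]
          exact add_le_add (sum_empiricalDensity_fiber_le_one q N) le_rfl
  have hdefect : Tendsto defect atTop (𝓝 0) := by
    have := tendsto_finsetSum Finset.univ fun c' _ => hI.2.2 (d c')
    rwa [Finset.sum_const_zero] at this
  exact upperDensity_le_of_tendsto hbound (by simpa using (hdefect.const_add 1).div_const _)

lemma upperDensity_le_card_image_div {G : Type*} [AddCommGroup G] [Finite G]
    (hI : IsFolner I) (q : O →+ G) (hq : Function.Surjective q) (A : Set O) :
    upperDensity I A ≤ Nat.card (q '' A) / Nat.card G := by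
  have hfin : (q '' A).Finite := Set.toFinite _
  calc upperDensity I A ≤ upperDensity I (⋃ c ∈ hfin.toFinset, q ⁻¹' {c}) :=
        upperDensity_mono fun x hx => Set.mem_biUnion (hfin.mem_toFinset.2 ⟨x, hx, rfl⟩) rfl
    _ ≤ ∑ _c ∈ hfin.toFinset, 1 / (Nat.card G : ℝ) :=
        (upperDensity_biUnion_le _ _).trans
          (Finset.sum_le_sum fun c _ => upperDensity_fiber_le hI q hq c)
    _ = Nat.card (q '' A) / Nat.card G := by
        rw [Finset.sum_const, nsmul_eq_mul, Nat.card_coe_set_eq, Set.ncard_eq_toFinset_card _ hfin]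
        ring

lemma Sieve.upperDensity_RSet_le (hI : IsFolner I) (S : Sieve O) (i : ℕ) :
    upperDensity I (S.RSet i) ≤ (S.cardR i : ℝ) / (S.normb i : ℝ) :=
  have := S.finQuot i
  upperDensity_le_card_image_div hI (Ideal.Quotient.mk (S.b i)).toAddMonoidHom
    Ideal.Quotient.mk_surjective _

end Folner

section Tails

variable {α : Type} {I : ℕ → Set α} {R : ℕ → Set α}

lemma unionGe_eq_iUnion_add (R : ℕ → Set α) (L : ℕ) : unionGe R L = ⋃ i, R (L + i) := by
  ext x
  simp only [unionGe, Set.mem_iUnion]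
  exact ⟨fun ⟨i, hi, hx⟩ => ⟨i - L, by rwa [Nat.add_sub_cancel' hi]⟩,
    fun ⟨i, hx⟩ => ⟨L + i, Nat.le_add_right L i, hx⟩⟩

lemma unionGe_add (R : ℕ → Set α) (L L' : ℕ) :
    unionGe (fun i => R (L + i)) L' = unionGe R (L + L') := by
  simp only [unionGe_eq_iUnion_add, add_assoc]

lemma unionLt_eq_biUnion_range (R : ℕ → Set α) (L : ℕ) :
    unionLt R L = ⋃ i ∈ Finset.range L, R i := by
  simp [unionLt]

lemma iUnion_eq_unionLt_union_sdiff (R : ℕ → Set α) (L : ℕ) :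
    ⋃ i, R i = unionLt R L ∪ (unionGe R L \ unionLt R L) := by
  rw [Set.union_sdiff_self]
  ext x
  simp only [unionLt, unionGe, Set.mem_union, Set.mem_iUnion]
  exact ⟨fun ⟨i, hx⟩ => (lt_or_ge i L).imp (fun h => ⟨i, h, hx⟩) (fun h => ⟨i, h, hx⟩),
    fun h => h.elim (fun ⟨i, _, hx⟩ => ⟨i, hx⟩) (fun ⟨i, _, hx⟩ => ⟨i, hx⟩)⟩

lemma StrongLightTailsFam.shift (h : StrongLightTailsFam I R) (L : ℕ) :
    StrongLightTailsFam I (fun i => R (L + i)) :=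
  (h.comp (tendsto_add_atTop_nat L)).congr fun L' => by
    rw [Function.comp_apply, unionGe_add, add_comm]

lemma StrongLightTailsFam.weakLightTailsFam (h : StrongLightTailsFam I R) :
    WeakLightTailsFam I R :=
  squeeze_zero (fun _ => upperDensity_nonneg _) (fun _ => upperDensity_mono Set.sdiff_subset) h

lemma upperDensity_iUnion_le_tsum {f : ℕ → ℝ} (hR : ∀ i, upperDensity I (R i) ≤ f i)
    (hf : Summable f) (hw : WeakLightTailsFam I R) :
    upperDensity I (⋃ i, R i) ≤ ∑' i, f i := by
  have hhead : ∀ L, upperDensity I (unionLt R L) ≤ ∑' i, f i := fun L =>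
    calc upperDensity I (unionLt R L) ≤ ∑ i ∈ Finset.range L, upperDensity I (R i) := by
          rw [unionLt_eq_biUnion_range]; exact upperDensity_biUnion_le _ _
      _ ≤ ∑ i ∈ Finset.range L, f i := Finset.sum_le_sum fun i _ => hR i
      _ ≤ ∑' i, f i :=
          hf.sum_le_tsum _ fun i _ => (upperDensity_nonneg _).trans (hR i)
  refine ge_of_tendsto' (by simpa using hw.const_add (∑' i, f i)) fun L => ?_
  rw [iUnion_eq_unionLt_union_sdiff R L]
  exact (upperDensity_union_le _ _).trans (add_le_add (hhead L) le_rfl)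

end Tails

theorem strong_light_tails_iff_tails_weak_general
    {m : ℕ} (K : Fin m → Type) [∀ j, Field (K j)]
    [∀ j, NumberField (K j)]
    (S : Sieve (OK K)) (hE : S.IsErdos) (I : ℕ → Set (OK K)) (hI : IsFolner I) :
    S.HasStrongLightTails I ↔
      ∀ L : ℕ, (Summable fun i => (S.cardR (L + i) : ℝ) / (S.normb (L + i) : ℝ))
        ∧ WeakLightTailsFam I (fun i => S.RSet (L + i)) := by
  set f : ℕ → ℝ := fun i => (S.cardR i : ℝ) / (S.normb i : ℝ)
  have htail : ∀ L, Summable fun i => f (L + i) := fun L => by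
    simpa only [add_comm L] using (summable_nat_add_iff L).2 hE
  constructor
  · rintro ⟨-, hS⟩ L
    exact ⟨htail L, (hS.shift L).weakLightTailsFam⟩
  · intro h
    refine ⟨hE, squeeze_zero (g := fun L => ∑' i, f (L + i))
      (fun _ => upperDensity_nonneg _) (fun L => ?_) ?_⟩
    · rw [unionGe_eq_iUnion_add]
      exact upperDensity_iUnion_le_tsum (fun i => S.upperDensity_RSet_le hI (L + i))
        (htail L) (h L).2
    · simpa only [add_comm] using tendsto_sum_nat_add f

/-- **Strong light tails ⟺ all tail sieves have weak light tails.** An Erdős sieve `R` has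
strong light tails for `I` iff for every `L` the tail sieve `R^L_i := R_{L+i}` has weak
light tails for `I`. -/
theorem strong_light_tails_iff_tails_weak
    {m : ℕ} (hm : 0 < m) (K : Fin m → Type) [∀ j, Field (K j)]
    [∀ j, NumberField (K j)]
    (S : Sieve (OK K)) (hE : S.IsErdos) (I : ℕ → Set (OK K)) (hI : IsFolner I) :
    S.HasStrongLightTails I ↔
      ∀ L : ℕ, (Summable fun i => (S.cardR (L + i) : ℝ) / (S.normb (L + i) : ℝ))
        ∧ WeakLightTailsFam I (fun i => S.RSet (L + i)) :=
  strong_light_tails_iff_tails_weak_general K S hE I hI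

end ErdosSieve
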